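/- arXiv:0709.1537 — 2 statements merged into one kernel-verified Lean document; each statement's English description precedes it below -/
import Mathlib

section
/- For any two positive integers k and ℓ there exists an integer n₃ > ℓ such that (𝔪^{n₃}M + H⁰_𝔪(M)) :_M 𝔪^{k} ⊆ 𝔪^{ℓ}M + H⁰_𝔪(M). -/
/-!
Choose generators `a₁, …, a_s` of `𝔪^k` and let `f : M → (M/H⁰_𝔪(M))^s`, `x ↦ (aᵢx)ᵢ`. An element
of `(𝔪^n M + H⁰_𝔪(M)) :_M 𝔪^k` is mapped by `f` into `𝔪^n (M/H⁰_𝔪(M))^s`, and the Artin–Rees lemma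
for `f(M)` gives `f⁻¹(𝔪^(n+c) (M/H⁰_𝔪(M))^s) ⊆ 𝔪^n M + ker f` for a fixed `c`. Finally
`ker f = H⁰_𝔪(M) :_M 𝔪^k = H⁰_𝔪(M)`, because `H⁰_𝔪(M) = 0 :_M 𝔪^t` for some `t` by Noetherianity.
-/

open IsLocalRing

section Preliminaries

variable {R : Type} [CommRing R]

/-- The colon submodule `N :_M I = { m ∈ M | I m ⊆ N }`. -/
def modColon {M : Type} [AddCommGroup M] [Module R M] (N : Submodule R M) (I : Ideal R) :
    Submodule R M where
  carrier := {m | ∀ r ∈ I, r • m ∈ N}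
  add_mem' := fun {a b} ha hb r hr => by
    rw [smul_add]; exact N.add_mem (ha r hr) (hb r hr)
  zero_mem' := fun r hr => by rw [smul_zero]; exact N.zero_mem
  smul_mem' := fun c {m} hm r hr => by
    rw [smul_comm]; exact N.smul_mem c (hm r hr)

theorem mem_modColon {M : Type} [AddCommGroup M] [Module R M] {N : Submodule R M} {I : Ideal R}
    {m : M} : m ∈ modColon N I ↔ ∀ r ∈ I, r • m ∈ N := Iff.rfl

/-- The socle `Soc(N) = 0 :_N 𝔪` of a module `N` over a local ring `R`. -/
def socle (R : Type) [CommRing R] [IsLocalRing R] (N : Type) [AddCommGroup N] [Module R N] :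
    Submodule R N :=
  modColon (⊥ : Submodule R N) (maximalIdeal R)

/-- The length of a module, as the Krull dimension of its lattice of submodules. -/
noncomputable def moduleLength (R N : Type) [CommRing R] [AddCommGroup N] [Module R N] :
    WithBot ℕ∞ :=
  Order.krullDim (Submodule R N)

/-- `s(N)`: the socle dimension of `N`, i.e. the dimension over the residue field `k = R/𝔪` of
the socle `Soc(N) = 0 :_N 𝔪`, equivalently the length of the socle as an `R`-module
(the socle is a `k`-vector space). -/
noncomputable def socDim (R : Type) [CommRing R] [IsLocalRing R] (N : Type) [AddCommGroup N]
    [Module R N] : WithBot ℕ∞ :=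
  moduleLength R (socle R N)

/-- The `0`-th local cohomology `H⁰_𝔪(N)`, as the submodule of elements of `N` annihilated by
some power of the maximal ideal. -/
def H0 (R : Type) [CommRing R] [IsLocalRing R] (N : Type) [AddCommGroup N] [Module R N] :
    Submodule R N :=
  ⨆ n : ℕ, modColon (⊥ : Submodule R N) (maximalIdeal R ^ n)

/-- The `i`-th local cohomology module `H^i_𝔪(N)` of `N` with support in the maximal ideal. -/
noncomputable def Hm (R : Type) [CommRing R] [IsLocalRing R] (i : ℕ) (N : Type) [AddCommGroup N]
    [Module R N] : Type :=
  ((localCohomology (maximalIdeal R) i).obj (ModuleCat.of R N))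

noncomputable instance {i : ℕ} {N : Type} [IsLocalRing R] [AddCommGroup N] [Module R N] :
    AddCommGroup (Hm R i N) := by
  unfold Hm; infer_instance

noncomputable instance {i : ℕ} {N : Type} [IsLocalRing R] [AddCommGroup N] [Module R N] :
    Module R (Hm R i N) := by
  unfold Hm; infer_instance

variable (R) [IsLocalRing R] (M : Type) [AddCommGroup M] [Module R M]

/-- The ideal `𝔮_j = (x₁,…,x_j)` generated by the first `j` elements of the sequence `x`
(`𝔮₀ = 0`). -/
def qIdeal {d : ℕ} (x : Fin d → R) (j : ℕ) : Ideal R :=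
  Ideal.span (x '' {i : Fin d | (i : ℕ) < j})

/-- `x₁, …, x_d` is a system of parameters of `M`: the `xᵢ` lie in the maximal ideal and
`M/(x₁,…,x_d)M` has finite length (where `d = dim M`).  The ideal generated by a system of
parameters is a parameter ideal of `M`. -/
def IsParamSeq {d : ℕ} (x : Fin d → R) : Prop :=
  (∀ i, x i ∈ maximalIdeal R) ∧
    IsFiniteLength R (M ⧸ (Ideal.span (Set.range x) • (⊤ : Submodule R M)))

/-- `M` is a generalized Cohen-Macaulay module of dimension `d`:
the local cohomology `H^i_𝔪(M)` has finite length for all `i = 0, …, d-1`. -/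
def IsGenCM (d : ℕ) : Prop :=
  ∀ i < d, IsFiniteLength R (Hm R i M)

/-- `dim M = d`: the Krull dimension of `M`, i.e. of `R / Ann M`, equals `d`. -/
def dimEq (d : ℕ) : Prop :=
  ringKrullDim (R ⧸ Module.annihilator R M) = (d : WithBot ℕ∞)

/-- `𝔮 = (x₁,…,x_d)` is a standard parameter ideal of `M`:
it is a parameter ideal with `𝔮 ⬝ H^i_𝔪(M/𝔮_j M) = 0` for all `i + j < d`. -/
def IsStandardParamSeq {d : ℕ} (x : Fin d → R) : Prop :=
  IsParamSeq R M x ∧ ∀ i j : ℕ, i + j < d →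
    Ideal.span (Set.range x) ≤
      Module.annihilator R (Hm R i (M ⧸ (qIdeal R x j • (⊤ : Submodule R M))))

end Preliminaries

section ArtinRees

variable {R M P : Type*} [CommRing R] [AddCommGroup M] [Module R M] [AddCommGroup P] [Module R P]

theorem Ideal.exists_comap_pow_smul_top_le [IsNoetherianRing R] [Module.Finite R P]
    (I : Ideal R) (f : M →ₗ[R] P) :
    ∃ c, ∀ n, (I ^ (n + c) • ⊤ : Submodule R P).comap f ≤ I ^ n • ⊤ ⊔ LinearMap.ker f := by
  obtain ⟨c, hc⟩ := I.exists_pow_inf_eq_pow_smul (LinearMap.range f)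
  refine ⟨c, fun n x hx => ?_⟩
  have hfx : f x ∈ I ^ (n + c) • ⊤ ⊓ LinearMap.range f := ⟨hx, LinearMap.mem_range_self f x⟩
  rw [hc _ le_add_self, add_tsub_cancel_right] at hfx
  have hfx' : f x ∈ (I ^ n • ⊤ : Submodule R M).map f := by
    rw [Submodule.map_smul'', Submodule.map_top]
    exact Submodule.smul_mono le_rfl inf_le_right hfx
  obtain ⟨w, hw, hfw⟩ := hfx'
  rw [← add_sub_cancel w x]
  exact Submodule.add_mem_sup hw (by rw [LinearMap.mem_ker, map_sub, hfw, sub_self])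

end ArtinRees

theorem Submodule.pi_smul_top_le_smul_top {R ι : Type*} {N : ι → Type*} [CommRing R]
    [∀ i, AddCommGroup (N i)] [∀ i, Module R (N i)] [Finite ι] (I : Ideal R) :
    Submodule.pi Set.univ (fun i => I • (⊤ : Submodule R (N i))) ≤ I • ⊤ := by
  classical
  rw [← Submodule.iSup_map_single]
  refine iSup_le fun i => ?_
  rw [Submodule.map_smul'']
  exact Submodule.smul_mono le_rfl le_top

section Colon

variable {R M : Type} [CommRing R] [AddCommGroup M] [Module R M]

theorem mem_modColon_span_iff {N : Submodule R M} {s : Set R} {x : M} :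
    x ∈ modColon N (Ideal.span s) ↔ ∀ a ∈ s, a • x ∈ N := by
  refine ⟨fun hx a ha => hx a (Ideal.subset_span ha), fun hx r hr => ?_⟩
  have hspan : Ideal.span s ≤ N.comap (LinearMap.toSpanSingleton R M x) :=
    Ideal.span_le.mpr hx
  exact hspan hr

theorem modColon_bot_pow_monotone (I : Ideal R) :
    Monotone fun n : ℕ => modColon (⊥ : Submodule R M) (I ^ n) :=
  fun _ _ hnm _ hx r hr => hx r (Ideal.pow_le_pow_right hnm hr)

def smulMkQPi (s : Set R) (N : Submodule R M) : M →ₗ[R] (s → M ⧸ N) :=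
  LinearMap.pi fun a => (a : R) • N.mkQ

theorem ker_smulMkQPi (s : Set R) (N : Submodule R M) :
    LinearMap.ker (smulMkQPi s N) = modColon N (Ideal.span s) := by
  ext x
  simp only [LinearMap.mem_ker, mem_modColon_span_iff, smulMkQPi, funext_iff, LinearMap.pi_apply,
    LinearMap.smul_apply, Submodule.mkQ_apply, Pi.zero_apply, ← Submodule.Quotient.mk_smul,
    Submodule.Quotient.mk_eq_zero, Subtype.forall]

theorem modColon_smul_top_sup_le_comap_smulMkQPi (s : Set R) [Finite s] (N : Submodule R M)
    (I : Ideal R) :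
    modColon (I • ⊤ ⊔ N) (Ideal.span s) ≤
      (I • ⊤ : Submodule R (s → M ⧸ N)).comap (smulMkQPi s N) := by
  intro x hx
  refine Submodule.pi_smul_top_le_smul_top I fun a _ => ?_
  have hmap : (I • ⊤ ⊔ N).map N.mkQ ≤ I • ⊤ := by
    rw [Submodule.map_sup, Submodule.map_smul'', Submodule.map_top, Submodule.range_mkQ,
      Submodule.mkQ_map_self, sup_bot_eq]
  exact hmap ⟨_, mem_modColon_span_iff.mp hx a a.2, rfl⟩

end Colon

section LocalCohomologyZero

variable {R M : Type} [CommRing R] [IsLocalRing R] [AddCommGroup M] [Module R M]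

theorem exists_H0_eq_modColon_bot [IsNoetherian R M] :
    ∃ t : ℕ, H0 R M = modColon ⊥ (maximalIdeal R ^ t) := by
  obtain ⟨t, ht⟩ := monotone_stabilizes_iff_noetherian.mpr ‹IsNoetherian R M›
    ⟨_, modColon_bot_pow_monotone (maximalIdeal R)⟩
  refine ⟨t, le_antisymm (iSup_le fun n => ?_) (le_iSup (fun n => modColon ⊥ _) t)⟩
  rcases le_total n t with h | h
  · exact modColon_bot_pow_monotone _ h
  · exact (ht n h).ge

theorem modColon_H0_le_H0 [IsNoetherian R M] (k : ℕ) :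
    modColon (H0 R M) (maximalIdeal R ^ k) ≤ H0 R M := by
  obtain ⟨t, ht⟩ := exists_H0_eq_modColon_bot (R := R) (M := M)
  intro x hx
  refine le_iSup (fun n => modColon (⊥ : Submodule R M) (maximalIdeal R ^ n)) (t + k) ?_
  intro r hr
  rw [pow_add] at hr
  refine Submodule.smul_induction_on' hr (fun a ha b hb => ?_) (fun _ _ _ _ h h' => ?_)
  · rw [smul_eq_mul, mul_smul]
    exact (ht ▸ hx b hb) a ha
  · rw [add_smul]
    exact add_mem h h'

end LocalCohomologyZero

theorem stmt_4_general
    (R : Type) [CommRing R] [IsLocalRing R] [IsNoetherianRing R]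
    (M : Type) [AddCommGroup M] [Module R M] [Module.Finite R M]
    (k l : ℕ) :
    ∃ n₃ : ℕ, l < n₃ ∧
      modColon ((maximalIdeal R ^ n₃ • (⊤ : Submodule R M)) ⊔ H0 R M) (maximalIdeal R ^ k) ≤
        (maximalIdeal R ^ l • (⊤ : Submodule R M)) ⊔ H0 R M := by
  obtain ⟨S, hS : Ideal.span (S : Set R) = maximalIdeal R ^ k⟩ :=
    IsNoetherian.noetherian (maximalIdeal R ^ k)
  set f := smulMkQPi (S : Set R) (H0 R M)
  obtain ⟨c, hc⟩ := (maximalIdeal R).exists_comap_pow_smul_top_le f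
  refine ⟨l + 1 + c, by omega, ?_⟩
  calc modColon (maximalIdeal R ^ (l + 1 + c) • ⊤ ⊔ H0 R M) (maximalIdeal R ^ k)
      ≤ Submodule.comap f (maximalIdeal R ^ (l + 1 + c) • ⊤) :=
        hS ▸ modColon_smul_top_sup_le_comap_smulMkQPi _ _ _
    _ ≤ maximalIdeal R ^ (l + 1) • ⊤ ⊔ LinearMap.ker f := hc (l + 1)
    _ ≤ maximalIdeal R ^ l • ⊤ ⊔ H0 R M := by
        refine sup_le_sup (Submodule.smul_mono_left (Ideal.pow_le_pow_right l.le_succ)) ?_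
        rw [ker_smulMkQPi, hS]
        exact modColon_H0_le_H0 k

/-- **Lemma 2.3.** Let `M` be a finitely generated module over a Noetherian local ring `(R, 𝔪)`
with `dim M = d ≥ 1`, and let `k` and `ℓ` be two positive integers.  Then there exists an
integer `n₃ > ℓ` such that `(𝔪^{n₃}M + H⁰_𝔪(M)) :_M 𝔪^k ⊆ 𝔪^ℓ M + H⁰_𝔪(M)`. -/
theorem stmt_4
    (R : Type) [CommRing R] [IsLocalRing R] [IsNoetherianRing R]
    (M : Type) [AddCommGroup M] [Module R M] [Module.Finite R M]
    (d : ℕ) (hd : 1 ≤ d) (hdim : dimEq R M d)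
    (k l : ℕ) (hk : 0 < k) (hl : 0 < l) :
    ∃ n₃ : ℕ, l < n₃ ∧
      modColon ((maximalIdeal R ^ n₃ • (⊤ : Submodule R M)) ⊔ H0 R M) (maximalIdeal R ^ k) ≤
        (maximalIdeal R ^ l • (⊤ : Submodule R M)) ⊔ H0 R M :=
  stmt_4_general R M k l
end

section
/- There exists a positive integer n₄ such that for all ideals K of R with K ⊆ 𝔪^{n₄}, one has (KM + H⁰_𝔪(M)) :_M 𝔪 = (KM :_M 𝔪) + H⁰_𝔪(M). -/
open IsLocalRing

/-!
`H⁰_𝔪(M)` is killed by a power of `𝔪`, so by Artin–Rees `𝔪^{n₀}M ∩ H⁰_𝔪(M) = 0` for some `n₀`.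
The socle of `M/H⁰_𝔪(M)` vanishes, so by prime avoidance over its finitely many associated
primes some `a ∈ 𝔪` is regular on it, and Artin–Rees for `aM` gives
`(𝔪^{n+e}M + H⁰_𝔪(M)) :_M a ⊆ 𝔪^n M + H⁰_𝔪(M)`. Hence for `K ⊆ 𝔪^{n₀+e+1}`, any `x` with
`𝔪x ⊆ KM + H⁰_𝔪(M)` is `u + w` with `u ∈ 𝔪^{n₀}M`, `w ∈ H⁰_𝔪(M)`; for `r ∈ 𝔪`, `ru` differs from
its `KM`-component by an element of `𝔪^{n₀}M ∩ H⁰_𝔪(M) = 0`, so `𝔪u ⊆ KM`.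
-/

open Submodule Pointwise

section Colon

variable {R M : Type} [CommRing R] [AddCommGroup M] [Module R M]

lemma modColon_sup_le_modColon_sup (N W : Submodule R M) (I : Ideal R) :
    modColon N I ⊔ W ≤ modColon (N ⊔ W) I :=
  sup_le (fun _ hx r hr => mem_sup_left (hx r hr))
    (fun _ hw r _ => mem_sup_right (W.smul_mem r hw))

lemma add_mem_modColon_sup_of_inf_eq_bot {N W L : Submodule R M} {I : Ideal R} (hL : L ⊓ W = ⊥)
    (hN : N ≤ L) {u w : M} (hu : u ∈ L) (hw : w ∈ W) (hx : u + w ∈ modColon (N ⊔ W) I) :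
    u + w ∈ modColon N I ⊔ W := by
  refine add_mem_sup (fun r hr => ?_) hw
  obtain ⟨κ, hκ, φ, hφ, hκφ⟩ := mem_sup.mp (hx r hr)
  have hdiff : r • u - κ ∈ L ⊓ W := by
    refine ⟨sub_mem (L.smul_mem r hu) (hN hκ), ?_⟩
    have : r • u - κ = φ - r • w := by
      rw [sub_eq_sub_iff_add_eq_add, ← smul_add, ← hκφ, add_comm]
    rw [this]
    exact sub_mem hφ (W.smul_mem r hw)
  rw [hL, mem_bot, sub_eq_zero] at hdiff
  rwa [hdiff]

end Colon

section ArtinRees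

variable {R M : Type} [CommRing R] [IsNoetherianRing R] [AddCommGroup M] [Module R M]
  [Module.Finite R M]

lemma exists_pow_smul_top_inf_eq_bot (I : Ideal R) {N : Submodule R M} {c : ℕ}
    (hN : I ^ c • N = ⊥) : ∃ n, I ^ n • ⊤ ⊓ N = ⊥ := by
  obtain ⟨k, hk⟩ := I.exists_pow_inf_eq_pow_smul N
  refine ⟨k + c, eq_bot_iff.mpr ?_⟩
  rw [hk _ (Nat.le_add_right k c), Nat.add_sub_cancel_left, ← hN]
  exact smul_mono_right _ inf_le_right

lemma IsSMulRegular.exists_mem_pow_smul_top_of_smul_mem {a : R} (ha : IsSMulRegular M a)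
    (I : Ideal R) :
    ∃ e, ∀ n (x : M), a • x ∈ I ^ (n + e) • (⊤ : Submodule R M) →
      x ∈ I ^ n • (⊤ : Submodule R M) := by
  obtain ⟨e, he⟩ := I.exists_pow_inf_eq_pow_smul (a • ⊤ : Submodule R M)
  refine ⟨e, fun n x hx => ?_⟩
  have hax : a • x ∈ I ^ n • (I ^ e • ⊤ ⊓ a • ⊤ : Submodule R M) := by
    rw [← Nat.add_sub_cancel n e, ← he (n + e) (Nat.le_add_left e n)]
    exact ⟨hx, smul_mem_pointwise_smul x a ⊤ mem_top⟩
  have hcomm : I ^ n • (a • ⊤ : Submodule R M) = a • (I ^ n • ⊤) := by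
    rw [← ideal_span_singleton_smul, ← ideal_span_singleton_smul, ← Submodule.mul_smul,
      ← Submodule.mul_smul, mul_comm]
  have hax' : a • x ∈ a • (I ^ n • ⊤ : Submodule R M) :=
    hcomm ▸ (smul_mono_right (I ^ n) inf_le_right : _ ≤ I ^ n • (a • ⊤ : Submodule R M)) hax
  obtain ⟨u, hu, hux⟩ := (mem_smul_pointwise_iff_exists _ _ _).mp hax'
  exact ha hux ▸ hu

lemma exists_mem_pow_smul_top_sup_of_smul_mem (I : Ideal R) {W : Submodule R M} {a : R}
    (ha : IsSMulRegular (M ⧸ W) a) :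
    ∃ e, ∀ n (x : M), a • x ∈ I ^ (n + e) • ⊤ ⊔ W → x ∈ I ^ n • ⊤ ⊔ W := by
  have hmem (J : Ideal R) (y : M) :
      y ∈ J • ⊤ ⊔ W ↔ W.mkQ y ∈ J • (⊤ : Submodule R (M ⧸ W)) := by
    rw [sup_comm, ← comap_map_mkQ, mem_comap, map_smul'', Submodule.map_top, range_mkQ]
  obtain ⟨e, he⟩ := ha.exists_mem_pow_smul_top_of_smul_mem I
  refine ⟨e, fun n x hx => ?_⟩
  rw [hmem] at hx ⊢
  exact he n _ (by simpa using hx)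

end ArtinRees

section LocalRing

variable {R : Type} [CommRing R] [IsLocalRing R] [IsNoetherianRing R]

lemma exists_isSMulRegular_of_socle_eq_bot {X : Type} [AddCommGroup X] [Module R X]
    [Module.Finite R X] (hX : socle R X = ⊥) : ∃ a ∈ maximalIdeal R, IsSMulRegular X a := by
  by_contra! h
  have hcover : (maximalIdeal R : Set R) ⊆ ⋃ p ∈ associatedPrimes R X, p := by
    intro a ha
    rw [biUnion_associatedPrimes_eq_zero_divisors]
    simpa [isSMulRegular_iff_right_eq_zero_of_smul, and_comm] using h a ha
  obtain ⟨p, hp, hle⟩ := (Ideal.subset_union_prime_finite (associatedPrimes.finite R X) ⊥ ⊥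
    (fun p hp _ _ => hp.isPrime)).mp hcover
  obtain ⟨hprime, x, rfl⟩ := isAssociatedPrime_iff.mp hp
  have hx : x = 0 := by
    rw [← mem_bot R, ← hX]
    exact fun r hr => mem_colon_singleton.mp (hle hr)
  exact hprime.ne_top (eq_top_iff.mpr fun r _ => mem_colon_singleton.mpr (by simp [hx]))

variable (R) (M : Type) [AddCommGroup M] [Module R M] [Module.Finite R M]

lemma exists_pow_smul_H0_eq_bot : ∃ c, maximalIdeal R ^ c • H0 R M = ⊥ := by
  let f : ℕ →o Submodule R M := ⟨fun n => modColon ⊥ (maximalIdeal R ^ n),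
    fun _ _ h _ hx r hr => hx r (Ideal.pow_le_pow_right h hr)⟩
  obtain ⟨c, hc⟩ := monotone_stabilizes_iff_noetherian.mpr inferInstance f
  have hH0 : H0 R M ≤ f c :=
    iSup_le fun n => (le_total n c).elim (fun h => f.monotone h) fun h => (hc n h).ge
  exact ⟨c, eq_bot_iff.mpr (smul_le.mpr fun r hr x hx => hH0 hx r hr)⟩

lemma socle_quotient_H0_eq_bot : socle R (M ⧸ H0 R M) = ⊥ := by
  obtain ⟨c, hc⟩ := exists_pow_smul_H0_eq_bot R M
  refine eq_bot_iff.mpr fun y hy => ?_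
  obtain ⟨x, rfl⟩ := (H0 R M).mkQ_surjective y
  have hx (r : R) (hr : r ∈ maximalIdeal R) : r • x ∈ H0 R M := by
    simpa [← Quotient.mk_smul, Quotient.mk_eq_zero] using hy r hr
  have hcolon : maximalIdeal R ^ (c + 1) ≤ (⊥ : Submodule R M).colon {x} := by
    rw [pow_succ]
    refine Ideal.mul_le.mpr fun r hr t ht => mem_colon_singleton.mpr ?_
    rw [mul_smul, ← hc]
    exact smul_mem_smul hr (hx t ht)
  rw [mem_bot, mkQ_apply, Quotient.mk_eq_zero]
  exact mem_iSup_of_mem (c + 1) fun s hs => mem_colon_singleton.mp (hcolon hs)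

end LocalRing

theorem stmt_5_general
    (R : Type) [CommRing R] [IsLocalRing R] [IsNoetherianRing R]
    (M : Type) [AddCommGroup M] [Module R M] [Module.Finite R M] :
    ∃ n₄ : ℕ, 0 < n₄ ∧ ∀ K : Ideal R, K ≤ maximalIdeal R ^ n₄ →
      modColon ((K • (⊤ : Submodule R M)) ⊔ H0 R M) (maximalIdeal R) =
        modColon (K • (⊤ : Submodule R M)) (maximalIdeal R) ⊔ H0 R M := by
  obtain ⟨c, hc⟩ := exists_pow_smul_H0_eq_bot R M
  obtain ⟨n₀, hn₀⟩ := exists_pow_smul_top_inf_eq_bot (maximalIdeal R) hc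
  obtain ⟨a, ha, hreg⟩ := exists_isSMulRegular_of_socle_eq_bot (socle_quotient_H0_eq_bot R M)
  obtain ⟨e, he⟩ := exists_mem_pow_smul_top_sup_of_smul_mem (maximalIdeal R) hreg
  refine ⟨n₀ + e + 1, Nat.succ_pos _, fun K hK => le_antisymm (fun x hx => ?_)
    (modColon_sup_le_modColon_sup _ _ _)⟩
  have hKle (n : ℕ) (hn : n ≤ n₀ + e + 1) : K • (⊤ : Submodule R M) ≤ maximalIdeal R ^ n • ⊤ :=
    smul_mono_left (hK.trans (Ideal.pow_le_pow_right hn))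
  have hax : a • x ∈ maximalIdeal R ^ (n₀ + e) • ⊤ ⊔ H0 R M :=
    sup_le_sup_right (hKle _ (Nat.le_succ _)) _ (hx a ha)
  obtain ⟨u, hu, w, hw, rfl⟩ := mem_sup.mp (he n₀ x hax)
  exact add_mem_modColon_sup_of_inf_eq_bot hn₀ (hKle n₀ (by omega)) hu hw hx

/-- **Lemma 2.4.** Let `M` be a finitely generated module over a Noetherian local ring `(R, 𝔪)`
with `dim M = d ≥ 1`.  Then there exists a positive integer `n₄` such that for all ideals
`K ⊆ 𝔪^{n₄}` one has `(KM + H⁰_𝔪(M)) :_M 𝔪 = (KM :_M 𝔪) + H⁰_𝔪(M)`. -/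
theorem stmt_5
    (R : Type) [CommRing R] [IsLocalRing R] [IsNoetherianRing R]
    (M : Type) [AddCommGroup M] [Module R M] [Module.Finite R M]
    (d : ℕ) (hd : 1 ≤ d) (hdim : dimEq R M d) :
    ∃ n₄ : ℕ, 0 < n₄ ∧ ∀ K : Ideal R, K ≤ maximalIdeal R ^ n₄ →
      modColon ((K • (⊤ : Submodule R M)) ⊔ H0 R M) (maximalIdeal R) =
        modColon (K • (⊤ : Submodule R M)) (maximalIdeal R) ⊔ H0 R M :=
  stmt_5_general R M
end
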